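/- Let a ≥ 1, k ≥ 2, and 1 ≤ s ≤ k−1 be integers, and let T = SLP(a+s, a; 0; k−1, 0). Then T is a tree with exactly k interior (non-leaf) vertices and b = ak+s leaves, and its first Dirichlet eigenvalue (with leaves as boundary) is λ₁(T) = σ₁(a,k,s) := (k + 2a + s − √((k+s−2)² + 4k − 4))/2; moreover a < σ₁(a,k,s) < a+1. -/

import Mathlib

open scoped Classical
open Finset

/-- The Dirichlet energy `∑_{{x,y} ∈ E} (f(x) - f(y))²` of a function on the vertices,
computed as half of the sum over ordered adjacent pairs. -/
noncomputable def dirichletForm {V : Type*} [Fintype V] (G : SimpleGraph V) (f : V → ℝ) : ℝ :=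
  (∑ x : V, ∑ y : V, if G.Adj x y then (f x - f y) ^ 2 else 0) / 2

/-- The first Dirichlet eigenvalue of a graph `G` with boundary `B`:
the infimum of Rayleigh quotients of nonzero functions vanishing on `B`. -/
noncomputable def lambda1 {V : Type*} [Fintype V] (G : SimpleGraph V) (B : Finset V) : ℝ :=
  sInf { r : ℝ | ∃ f : V → ℝ, (∀ x ∈ B, f x = 0) ∧ f ≠ 0 ∧
    r = dirichletForm G f / ∑ x ∈ Bᶜ, f x ^ 2 }

/-- The distance from a vertex to a set of vertices. -/
noncomputable def distToSet {V : Type*} (G : SimpleGraph V) (B : Finset V) (v : V) : ℕ :=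
  sInf { n : ℕ | ∃ b ∈ B, G.dist v b = n }

/-- The inscribed radius of a graph with boundary: `max_{v ∈ V} dist(v, B)`. -/
noncomputable def inradius {V : Type*} [Fintype V] (G : SimpleGraph V) (B : Finset V) : ℕ :=
  Finset.univ.sup fun v => distToSet G B v

/-- The diameter of a graph: `max_{v,w ∈ V} dist(v, w)`. -/
noncomputable def graphDiam {V : Type*} [Fintype V] (G : SimpleGraph V) : ℕ :=
  Finset.univ.sup fun v => Finset.univ.sup fun w => G.dist v w

/-- The set of leaves (degree-one vertices) of a graph. -/
noncomputable def leaves {V : Type*} [Fintype V] (G : SimpleGraph V) : Finset V :=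
  Finset.univ.filter fun v => G.degree v = 1

/-- Vertex type of the star-like path tree `SLP(p, q; c; d, e)`:
`path i` are the path vertices `u₀, …, u_c`; `dbr i` are the vertices `u_{0,i}` attached
to `u₀`; `ebr j` are the vertices `u_{c,j}` attached to `u_c`; `pleaf0` are the `p`
pendant leaves at `u₀`; `pleafc` are the `p` pendant leaves at `u_c` (absent when
`c = 0`, since then `u_c = u₀`); `qleafD i m`, `qleafE j m`, `qleafM m m'` are the `q`
pendant leaves at `u_{0,i}`, at `u_{c,j}`, and at the interior path vertex `u_{m+1}`
(`1 ≤ m+1 ≤ c-1`), respectively. -/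
inductive SLPVert (p q c d e : ℕ) : Type where
  | path : Fin (c + 1) → SLPVert p q c d e
  | dbr : Fin d → SLPVert p q c d e
  | ebr : Fin e → SLPVert p q c d e
  | pleaf0 : Fin p → SLPVert p q c d e
  | pleafc : Fin (if c = 0 then 0 else p) → SLPVert p q c d e
  | qleafD : Fin d → Fin q → SLPVert p q c d e
  | qleafE : Fin e → Fin q → SLPVert p q c d e
  | qleafM : Fin (c - 1) → Fin q → SLPVert p q c d e
deriving DecidableEq, Fintype

/-- Base relation generating the edges of the star-like path tree. -/
def SLPRel {p q c d e : ℕ} : SLPVert p q c d e → SLPVert p q c d e → Prop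
  | .path i, .path j => (i : ℕ) + 1 = (j : ℕ)
  | .path i, .dbr _ => (i : ℕ) = 0
  | .path i, .ebr _ => (i : ℕ) = c
  | .path i, .pleaf0 _ => (i : ℕ) = 0
  | .path i, .pleafc _ => (i : ℕ) = c
  | .path i, .qleafM m _ => (i : ℕ) = (m : ℕ) + 1
  | .dbr i, .qleafD i' _ => i = i'
  | .ebr j, .qleafE j' _ => j = j'
  | _, _ => False

/-- The star-like path tree `SLP(p, q; c; d, e)`. -/
def SLP (p q c d e : ℕ) : SimpleGraph (SLPVert p q c d e) :=
  SimpleGraph.fromRel SLPRel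

/-- `σ₁(a,k,s) = (k + 2a + s − √((k+s−2)² + 4k − 4)) / 2`. -/
noncomputable def sigma1 (a k s : ℕ) : ℝ :=
  ((k : ℝ) + 2 * a + s - Real.sqrt (((k : ℝ) + s - 2) ^ 2 + 4 * k - 4)) / 2

open SLPVert in
def slpEquiv (p q d : ℕ) : SLPVert p q 0 d 0 ≃ (Unit ⊕ Fin d ⊕ Fin p ⊕ Fin d × Fin q) where
  toFun v := match v with
    | .path _ => .inl ()
    | .dbr i => .inr (.inl i)
    | .pleaf0 m => .inr (.inr (.inl m))
    | .qleafD i m => .inr (.inr (.inr (i, m)))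
    | .ebr j => j.elim0
    | .pleafc m => m.elim0
    | .qleafE j _ => j.elim0
    | .qleafM m _ => m.elim0
  invFun x := match x with
    | .inl _ => .path 0
    | .inr (.inl i) => .dbr i
    | .inr (.inr (.inl m)) => .pleaf0 m
    | .inr (.inr (.inr (i, m))) => .qleafD i m
  left_inv v := by
    cases v with
    | path i => simp only; congr 1; exact (Fin.ext (Nat.lt_one_iff.mp i.isLt)).symm
    | dbr i => rfl
    | pleaf0 m => rfl
    | qleafD i m => rfl
    | ebr j => exact j.elim0
    | pleafc m => exact m.elim0
    | qleafE j _ => exact j.elim0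
    | qleafM m _ => exact m.elim0
  right_inv x := by rcases x with _ | (i | (m | ⟨i, m⟩)) <;> rfl

lemma sum_V {p q d : ℕ} {M : Type*} [AddCommMonoid M] (g : SLPVert p q 0 d 0 → M) :
    ∑ x, g x = g (.path 0) + ∑ i : Fin d, g (.dbr i) + ∑ m : Fin p, g (.pleaf0 m)
      + ∑ i : Fin d, ∑ m : Fin q, g (.qleafD i m) := by
  rw [← Equiv.sum_comp (slpEquiv p q d).symm g]
  simp [Fintype.sum_sum_type, Fintype.sum_prod_type, slpEquiv, add_assoc]

lemma card_V (p q d : ℕ) : Fintype.card (SLPVert p q 0 d 0) = 1 + d + p + d * q := by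
  rw [Fintype.card_congr (slpEquiv p q d)]
  simp [Fintype.card_sum, Fintype.card_prod, add_assoc]

example (p q d : ℕ) (i j : Fin d) (m : Fin q) (x : Fin p) : 
    ((SLP p q 0 d 0).Adj (.path 0) (.dbr i)) ∧ ((SLP p q 0 d 0).Adj (.path 0) (.pleaf0 x))
    ∧ ((SLP p q 0 d 0).Adj (.dbr i) (.qleafD j m) ↔ i = j) 
    ∧ ¬ ((SLP p q 0 d 0).Adj (.path 0) (.qleafD j m)) := by
  simp [SLP, SLPRel, SimpleGraph.fromRel_adj]
section SLPLemmas
variable {p q d : ℕ}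

open SLPVert SimpleGraph

lemma path_eq (i : Fin (0+1)) : (SLPVert.path i : SLPVert p q 0 d 0) = .path 0 := by
  congr 1; exact Fin.ext (Nat.lt_one_iff.mp i.isLt)

lemma adj_iff (x y : SLPVert p q 0 d 0) :
    (SLP p q 0 d 0).Adj x y ↔
      (∃ i, (x = .path 0 ∧ y = .dbr i) ∨ (x = .dbr i ∧ y = .path 0)) ∨
      (∃ m, (x = .path 0 ∧ y = .pleaf0 m) ∨ (x = .pleaf0 m ∧ y = .path 0)) ∨
      (∃ i m, (x = .dbr i ∧ y = .qleafD i m) ∨ (x = .qleafD i m ∧ y = .dbr i)) := by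
  cases x <;> cases y <;>
    first
    | exact Fin.elim0 (by assumption)
    | (simp_all [SLP, SLPRel, SimpleGraph.fromRel_adj, path_eq, Fin.ext_iff,
        Nat.lt_one_iff.mp (Fin.isLt _)] <;> aesop)

lemma degree_eq_sum (v : SLPVert p q 0 d 0) :
    (SLP p q 0 d 0).degree v = ∑ y, if (SLP p q 0 d 0).Adj v y then 1 else 0 := by
  rw [show (SLP p q 0 d 0).degree v = ((SLP p q 0 d 0).neighborFinset v).card from rfl,
    SimpleGraph.neighborFinset_eq_filter, Finset.card_filter]

lemma degree_path : (SLP p q 0 d 0).degree (.path 0) = d + p := by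
  rw [degree_eq_sum, sum_V]; simp [adj_iff]

lemma degree_dbr (i : Fin d) : (SLP p q 0 d 0).degree (.dbr i) = 1 + q := by
  rw [degree_eq_sum, sum_V]; simp [adj_iff, Finset.sum_ite_eq]

lemma degree_pleaf0 (m : Fin p) : (SLP p q 0 d 0).degree (.pleaf0 m) = 1 := by
  rw [degree_eq_sum, sum_V]; simp [adj_iff]

lemma degree_qleafD (i : Fin d) (m : Fin q) :
    (SLP p q 0 d 0).degree (.qleafD i m) = 1 := by
  rw [degree_eq_sum, sum_V]; simp [adj_iff, Finset.sum_ite_eq]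

end SLPLemmas
section SLPTree
variable {p q d : ℕ}
open SLPVert SimpleGraph

lemma closed_not_reachable {V : Type*} (H : SimpleGraph V) (S : Set V)
    (hS : ∀ ⦃v w⦄, v ∈ S → H.Adj v w → w ∈ S) {v w : V} (hv : v ∈ S) (hw : w ∉ S) :
    ¬ H.Reachable v w := by
  intro h
  obtain ⟨pp⟩ := h
  induction pp with
  | nil => exact hw hv
  | cons h q ih => exact ih (hS hv h) hw

lemma adj_path_dbr (i : Fin d) : (SLP p q 0 d 0).Adj (.path 0) (.dbr i) := by
  simp [adj_iff]

lemma adj_path_pleaf0 (m : Fin p) : (SLP p q 0 d 0).Adj (.path 0) (.pleaf0 m) := by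
  simp [adj_iff]

lemma adj_dbr_qleafD (i : Fin d) (m : Fin q) :
    (SLP p q 0 d 0).Adj (.dbr i) (.qleafD i m) := by
  rw [adj_iff]; exact Or.inr (Or.inr ⟨i, m, Or.inl ⟨rfl, rfl⟩⟩)

lemma neighbors_dbr {i : Fin d} {x : SLPVert p q 0 d 0} (h : (SLP p q 0 d 0).Adj (.dbr i) x) :
    x = .path 0 ∨ ∃ m, x = .qleafD i m := by
  rw [adj_iff] at h
  rcases h with ⟨i', ⟨hv, hw⟩ | ⟨hv, hw⟩⟩ | ⟨m', ⟨hv, hw⟩ | ⟨hv, hw⟩⟩ |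
    ⟨i', m', ⟨hv, hw⟩ | ⟨hv, hw⟩⟩ <;> (try cases hv) <;>
    first | exact Or.inl hw | exact Or.inr ⟨m', hw⟩

lemma neighbors_pleaf0 {m : Fin p} {x : SLPVert p q 0 d 0}
    (h : (SLP p q 0 d 0).Adj (.pleaf0 m) x) : x = .path 0 := by
  rw [adj_iff] at h
  rcases h with ⟨i', ⟨hv, hw⟩ | ⟨hv, hw⟩⟩ | ⟨m', ⟨hv, hw⟩ | ⟨hv, hw⟩⟩ |
    ⟨i', m', ⟨hv, hw⟩ | ⟨hv, hw⟩⟩ <;> (try cases hv) <;> exact hw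

lemma neighbors_qleafD {i : Fin d} {m : Fin q} {x : SLPVert p q 0 d 0}
    (h : (SLP p q 0 d 0).Adj (.qleafD i m) x) : x = .dbr i := by
  rw [adj_iff] at h
  rcases h with ⟨i', ⟨hv, hw⟩ | ⟨hv, hw⟩⟩ | ⟨m', ⟨hv, hw⟩ | ⟨hv, hw⟩⟩ |
    ⟨i', m', ⟨hv, hw⟩ | ⟨hv, hw⟩⟩ <;>
    (try cases hv) <;> exact hw

lemma slp_reachable (v : SLPVert p q 0 d 0) : (SLP p q 0 d 0).Reachable (.path 0) v := by
  cases v with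
  | path i => rw [path_eq i]
  | dbr i => exact (adj_path_dbr i).reachable
  | pleaf0 m => exact (adj_path_pleaf0 m).reachable
  | qleafD i m => exact (adj_path_dbr i).reachable.trans (adj_dbr_qleafD i m).reachable
  | ebr j => exact Fin.elim0 (by assumption)
  | pleafc m => exact Fin.elim0 (by assumption)
  | qleafE j m => exact Fin.elim0 (by assumption)
  | qleafM m m' => exact Fin.elim0 (by assumption)

lemma slp_connected : (SLP p q 0 d 0).Connected := by
  rw [SimpleGraph.connected_iff]
  exact ⟨fun u v => (slp_reachable u).symm.trans (slp_reachable v), ⟨.path 0⟩⟩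

lemma slp_acyclic : (SLP p q 0 d 0).IsAcyclic := by
  rw [SimpleGraph.isAcyclic_iff_forall_adj_isBridge]
  have closed : ∀ (e : Sym2 (SLPVert p q 0 d 0)) (v w : SLPVert p q 0 d 0)
      (S : Set (SLPVert p q 0 d 0)),
      (∀ ⦃x y⦄, x ∈ S → ((SLP p q 0 d 0) \ SimpleGraph.fromEdgeSet {e}).Adj x y →
        y ∈ S) → v ∈ S → w ∉ S →
      ¬ ((SLP p q 0 d 0) \ SimpleGraph.fromEdgeSet {e}).Reachable v w :=
    fun e v w S hS hv hw => closed_not_reachable _ S hS hv hw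
  have hDbrSet : ∀ (i : Fin d),
      (∀ ⦃x y : SLPVert p q 0 d 0⦄,
        x ∈ {x | x = SLPVert.dbr i ∨ ∃ m, x = SLPVert.qleafD i m} →
        ((SLP p q 0 d 0) \ SimpleGraph.fromEdgeSet {s(.path 0, .dbr i)}).Adj x y →
        y ∈ {x | x = SLPVert.dbr i ∨ ∃ m, x = SLPVert.qleafD i m}) := by
    rintro i x y (rfl | ⟨m', rfl⟩) ⟨hadj, hne⟩
    · rcases neighbors_dbr hadj with rfl | ⟨m', rfl⟩
      · exact absurd (by simp [Sym2.eq_swap]) hne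
      · exact Or.inr ⟨m', rfl⟩
    · exact Or.inl (neighbors_qleafD hadj)
  have hPleafSet : ∀ (m : Fin p),
      (∀ ⦃x y : SLPVert p q 0 d 0⦄, x ∈ {x | x = SLPVert.pleaf0 m} →
        ((SLP p q 0 d 0) \ SimpleGraph.fromEdgeSet {s(.path 0, .pleaf0 m)}).Adj x y →
        y ∈ {x | x = SLPVert.pleaf0 m}) := by
    rintro m x y rfl ⟨hadj, hne⟩
    rcases neighbors_pleaf0 hadj with rfl
    exact absurd (by simp [Sym2.eq_swap]) hne
  have hQleafSet : ∀ (i : Fin d) (m : Fin q),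
      (∀ ⦃x y : SLPVert p q 0 d 0⦄, x ∈ {x | x = SLPVert.qleafD i m} →
        ((SLP p q 0 d 0) \ SimpleGraph.fromEdgeSet {s(.dbr i, .qleafD i m)}).Adj x y →
        y ∈ {x | x = SLPVert.qleafD i m}) := by
    rintro i m x y rfl ⟨hadj, hne⟩
    rcases neighbors_qleafD hadj with rfl
    exact absurd (by simp [Sym2.eq_swap]) hne
  intro v w hvw
  rw [SimpleGraph.isBridge_iff]
  rcases (adj_iff v w).mp hvw with ⟨i, ⟨hv, hw⟩ | ⟨hv, hw⟩⟩ |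
      ⟨m, ⟨hv, hw⟩ | ⟨hv, hw⟩⟩ | ⟨i, m, ⟨hv, hw⟩ | ⟨hv, hw⟩⟩ <;> subst hv hw
  · exact fun h => closed _ _ _ _ (hDbrSet i) (Or.inl rfl) (by simp) h.symm
  · rw [Sym2.eq_swap]
    exact fun h => closed _ _ _ _ (hDbrSet i) (Or.inl rfl) (by simp) h
  · exact fun h => closed _ _ _ _ (hPleafSet m) rfl (by simp) h.symm
  · rw [Sym2.eq_swap]
    exact fun h => closed _ _ _ _ (hPleafSet m) rfl (by simp) h
  · exact fun h => closed _ _ _ _ (hQleafSet i m) rfl (by simp) h.symm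
  · rw [Sym2.eq_swap]
    exact fun h => closed _ _ _ _ (hQleafSet i m) rfl (by simp) h

lemma slp_isTree : (SLP p q 0 d 0).IsTree := ⟨slp_connected, slp_acyclic⟩

end SLPTree
section SLPCount
variable {p q d : ℕ}
open SLPVert SimpleGraph

lemma mem_leaves_iff (x : SLPVert p q 0 d 0) :
    x ∈ leaves (SLP p q 0 d 0) ↔ (SLP p q 0 d 0).degree x = 1 := by
  simp [leaves]

lemma leaves_card (hp : 2 ≤ p) (hq : 1 ≤ q) (hd : 1 ≤ d) :
    (leaves (SLP p q 0 d 0)).card = p + d * q := by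
  rw [leaves, Finset.card_filter, sum_V]
  rw [degree_path]
  simp only [degree_dbr, degree_pleaf0, degree_qleafD]
  rw [if_neg (by omega)]
  simp only [if_neg (show ¬(1 + q = 1) by omega), if_pos rfl]
  simp [mul_comm]

lemma leaves_compl_card (hp : 2 ≤ p) (hq : 1 ≤ q) (hd : 1 ≤ d) :
    ((leaves (SLP p q 0 d 0))ᶜ : Finset _).card = 1 + d := by
  rw [Finset.card_compl, leaves_card hp hq hd, card_V]
  omega

lemma pleaf0_mem_leaves (m : Fin p) : (SLPVert.pleaf0 m : SLPVert p q 0 d 0) ∈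
    leaves (SLP p q 0 d 0) := by
  rw [mem_leaves_iff]; exact degree_pleaf0 m

lemma qleafD_mem_leaves (i : Fin d) (m : Fin q) : (SLPVert.qleafD i m : SLPVert p q 0 d 0) ∈
    leaves (SLP p q 0 d 0) := by
  rw [mem_leaves_iff]; exact degree_qleafD i m

lemma boundary_sum (hp : 2 ≤ p) (hq : 1 ≤ q) (f : SLPVert p q 0 d 0 → ℝ) :
    ∑ x ∈ (leaves (SLP p q 0 d 0))ᶜ, f x ^ 2 =
      f (.path 0) ^ 2 + ∑ i : Fin d, f (.dbr i) ^ 2 := by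
  rw [leaves, Finset.compl_filter, Finset.sum_filter, sum_V]
  rw [degree_path]
  simp only [degree_dbr, degree_pleaf0, degree_qleafD]
  rw [if_pos (by omega)]
  simp only [if_pos (show ¬(1 + q = 1) by omega), if_neg (show ¬¬(1:ℕ) = 1 by simp)]
  simp

lemma dirichlet_eval (f : SLPVert p q 0 d 0 → ℝ)
    (h0 : ∀ m, f (.pleaf0 m) = 0) (h1 : ∀ i m, f (.qleafD i m) = 0) :
    dirichletForm (SLP p q 0 d 0) f =
      p * f (.path 0) ^ 2 +
        ∑ i : Fin d, ((f (.path 0) - f (.dbr i)) ^ 2 + q * f (.dbr i) ^ 2) := by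
  rw [dirichletForm, sum_V]
  simp only [sum_V]
  simp [adj_iff, h0, h1, Finset.sum_ite_eq, Finset.sum_ite_eq']
  have hsym : ∑ x : Fin d, ((f (SLPVert.dbr x) - f (SLPVert.path 0)) ^ 2
        + (q : ℝ) * f (SLPVert.dbr x) ^ 2) =
      ∑ x : Fin d, ((f (SLPVert.path 0) - f (SLPVert.dbr x)) ^ 2
        + (q : ℝ) * f (SLPVert.dbr x) ^ 2) :=
    Finset.sum_congr rfl (fun x _ => by ring)
  rw [hsym, Finset.sum_add_distrib]
  ring

end SLPCount

lemma boundary_sum' {p q d : ℕ} (inst : DecidableEq (SLPVert p q 0 d 0)) (hp : 2 ≤ p) (hq : 1 ≤ q)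
    (f : SLPVert p q 0 d 0 → ℝ) :
    ∑ x ∈ (@Compl.compl (Finset (SLPVert p q 0 d 0))
      (letI := inst; inferInstance) (leaves (SLP p q 0 d 0))), f x ^ 2 =
      f (.path 0) ^ 2 + ∑ i : Fin d, f (.dbr i) ^ 2 := by
  have h : inst = (instDecidableEqSLPVert : DecidableEq (SLPVert p q 0 d 0)) := by
    funext x y
    exact Subsingleton.elim _ _
  subst h
  exact boundary_sum hp hq f
lemma sigma1_props (a k s : ℕ) (ha : 1 ≤ a) (hk : 2 ≤ k) (hs1 : 1 ≤ s) (hsk : s + 1 ≤ k) :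
    (a:ℝ) < sigma1 a k s ∧ sigma1 a k s < a + 1 ∧
    ((a:ℝ) + s + ((k:ℝ) - 1) - sigma1 a k s) * ((a:ℝ) + 1 - sigma1 a k s) = (k:ℝ) - 1 := by
  have hk' : (2:ℝ) ≤ (k:ℝ) := by exact_mod_cast hk
  have hs' : (1:ℝ) ≤ (s:ℝ) := by exact_mod_cast hs1
  have ha' : (1:ℝ) ≤ (a:ℝ) := by exact_mod_cast ha
  have hsk' : (s:ℝ) + 1 ≤ (k:ℝ) := by exact_mod_cast hsk
  have hD0 : (0:ℝ) ≤ ((k:ℝ) + s - 2) ^ 2 + 4 * k - 4 := by nlinarith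
  have hr2 := Real.sq_sqrt hD0
  have hrnn := Real.sqrt_nonneg (((k:ℝ) + s - 2) ^ 2 + 4 * k - 4)
  have h1 : Real.sqrt (((k:ℝ) + s - 2) ^ 2 + 4 * k - 4) < (k:ℝ) + s := by nlinarith
  have h2 : (k:ℝ) + s - 2 < Real.sqrt (((k:ℝ) + s - 2) ^ 2 + 4 * k - 4) := by nlinarith
  unfold sigma1
  refine ⟨by linarith, by linarith, by linear_combination hr2 / 4⟩
theorem stmt14 (a k s : ℕ) (ha : 1 ≤ a) (hk : 2 ≤ k) (hs1 : 1 ≤ s) (hs2 : s ≤ k - 1) :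
    (SLP (a + s) a 0 (k - 1) 0).IsTree ∧
    ((leaves (SLP (a + s) a 0 (k - 1) 0))ᶜ : Finset _).card = k ∧
    (leaves (SLP (a + s) a 0 (k - 1) 0)).card = a * k + s ∧
    lambda1 (SLP (a + s) a 0 (k - 1) 0) (leaves (SLP (a + s) a 0 (k - 1) 0)) =
      sigma1 a k s ∧
    (a : ℝ) < sigma1 a k s ∧ sigma1 a k s < (a : ℝ) + 1 := by
  have hsk : s + 1 ≤ k := by omega
  obtain ⟨hb1, hb2, hchar0⟩ := sigma1_props a k s ha hk hs1 hsk
  have hp : 2 ≤ a + s := by omega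
  have hq : 1 ≤ a := ha
  have hd : 1 ≤ k - 1 := by omega
  refine ⟨slp_isTree, ?_, ?_, ?_, hb1, hb2⟩
  · rw [leaves_compl_card hp hq hd]; omega
  · rw [leaves_card hp hq hd]
    obtain ⟨t, rfl⟩ : ∃ t, k = t + 2 := ⟨k - 2, by omega⟩
    show a + s + (t + 1) * a = a * (t + 2) + s
    ring
  · -- the eigenvalue computation
    set lam := sigma1 a k s with hlam
    set A := (a : ℝ) with hA
    set dR := ((k : ℝ) - 1) with hdR
    have hdcast : ((k - 1 : ℕ) : ℝ) = dR := by
      rw [hdR]; push_cast [Nat.cast_sub (by omega : 1 ≤ k)]; ring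
    have hchar : (A + s + dR - lam) * (A + 1 - lam) = dR := hchar0
    have hbpos : 0 < A + 1 - lam := by linarith
    set G := SLP (a + s) a 0 (k - 1) 0 with hG
    set B := leaves G with hB
    -- lower bound for every Rayleigh quotient
    have hlow : ∀ f : SLPVert (a+s) a 0 (k-1) 0 → ℝ,
        (∀ x ∈ B, f x = 0) → f ≠ 0 →
        0 < f (.path 0) ^ 2 + ∑ i, f (.dbr i) ^ 2 ∧
        lam * (f (.path 0) ^ 2 + ∑ i, f (.dbr i) ^ 2) ≤ dirichletForm G f := by
      intro f hfB hf0
      have h0 : ∀ m, f (.pleaf0 m) = 0 := fun m => hfB _ (pleaf0_mem_leaves m)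
      have h1 : ∀ i m, f (.qleafD i m) = 0 := fun i m => hfB _ (qleafD_mem_leaves i m)
      set X := f (.path 0) with hX
      have hD : dirichletForm G f = (A + s) * X ^ 2 +
          ∑ i, ((X - f (.dbr i)) ^ 2 + A * f (.dbr i) ^ 2) := by
        rw [dirichlet_eval f h0 h1]; push_cast; ring
      have hsumnn : (0:ℝ) ≤ ∑ i, f (.dbr i) ^ 2 :=
        Finset.sum_nonneg fun i _ => sq_nonneg _
      have hNpos : 0 < X ^ 2 + ∑ i, f (.dbr i) ^ 2 := by
        rcases Function.ne_iff.mp hf0 with ⟨x, hx⟩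
        have : X ≠ 0 ∨ ∃ i, f (.dbr i) ≠ 0 := by
          cases x with
          | path i => left; rwa [path_eq i] at hx
          | dbr i => right; exact ⟨i, hx⟩
          | pleaf0 m => exact absurd (h0 m) hx
          | qleafD i m => exact absurd (h1 i m) hx
          | ebr j => exact Fin.elim0 (by assumption)
          | pleafc m => exact Fin.elim0 (by assumption)
          | qleafE j m => exact Fin.elim0 (by assumption)
          | qleafM m m' => exact Fin.elim0 (by assumption)
        rcases this with hx0 | ⟨i, hxi⟩
        · have : 0 < X ^ 2 := by positivity
          linarith
        · have h1' : f (.dbr i) ^ 2 ≤ ∑ j, f (.dbr j) ^ 2 :=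
            Finset.single_le_sum (f := fun j => f (SLPVert.dbr j) ^ 2)
              (fun j _ => sq_nonneg _) (Finset.mem_univ i)
          have : 0 < f (.dbr i) ^ 2 := by positivity
          nlinarith [sq_nonneg X]
      refine ⟨hNpos, ?_⟩
      have hg : ∀ i : Fin (k-1),
          (A + 1 - lam) * ((X - f (.dbr i)) ^ 2 + A * f (.dbr i) ^ 2)
            - (A + 1 - lam) * lam * f (.dbr i) ^ 2
          = ((A + 1 - lam) * f (.dbr i) - X) ^ 2 + ((A + 1 - lam) - 1) * X ^ 2 :=
        fun i => by ring
      have hkey : (A + 1 - lam) *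
            (dirichletForm G f - lam * (X ^ 2 + ∑ i, f (.dbr i) ^ 2))
          = ∑ i, ((A + 1 - lam) * f (.dbr i) - X) ^ 2 := by
        rw [hD]
        calc (A + 1 - lam) * ((A + s) * X ^ 2 +
              (∑ i, ((X - f (.dbr i)) ^ 2 + A * f (.dbr i) ^ 2)) -
              lam * (X ^ 2 + ∑ i, f (.dbr i) ^ 2))
            = (A + 1 - lam) * (A + s - lam) * X ^ 2 +
              ∑ i, ((A + 1 - lam) * ((X - f (.dbr i)) ^ 2 + A * f (.dbr i) ^ 2)
                - (A + 1 - lam) * lam * f (.dbr i) ^ 2) := by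
              rw [Finset.sum_sub_distrib, ← Finset.mul_sum, ← Finset.mul_sum]; ring
          _ = (A + 1 - lam) * (A + s - lam) * X ^ 2 +
              ∑ i, (((A + 1 - lam) * f (.dbr i) - X) ^ 2 + ((A + 1 - lam) - 1) * X ^ 2) := by
              rw [Finset.sum_congr rfl fun i _ => hg i]
          _ = ∑ i, ((A + 1 - lam) * f (.dbr i) - X) ^ 2 +
              ((A + 1 - lam) * (A + s - lam) + dR * ((A + 1 - lam) - 1)) * X ^ 2 := by
              rw [Finset.sum_add_distrib, Finset.sum_const, Finset.card_univ,
                Fintype.card_fin, nsmul_eq_mul, hdcast]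
              ring
          _ = ∑ i, ((A + 1 - lam) * f (.dbr i) - X) ^ 2 := by
              rw [show (A + 1 - lam) * (A + s - lam) + dR * ((A + 1 - lam) - 1) = 0 from by
                linear_combination hchar]
              ring
      have hEnn : (0:ℝ) ≤ ∑ i, ((A + 1 - lam) * f (.dbr i) - X) ^ 2 :=
        Finset.sum_nonneg fun i _ => sq_nonneg _
      nlinarith
    -- the minimizing function
    set bet := A + 1 - lam with hbet
    classical
    set f0 : SLPVert (a+s) a 0 (k-1) 0 → ℝ := fun v => match v with
      | .path _ => bet
      | .dbr _ => 1
      | _ => 0 with hf0def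
    have e1 : f0 (.path 0) = bet := rfl
    have e2 : ∀ i, f0 (.dbr i) = 1 := fun _ => rfl
    have hvanish : ∀ x ∈ B, f0 x = 0 := by
      intro x hx
      rw [hB, mem_leaves_iff] at hx
      cases x with
      | path i => rw [path_eq i, degree_path] at hx; exact absurd hx (by omega)
      | dbr i => rw [degree_dbr] at hx; exact absurd hx (by omega)
      | pleaf0 m => rfl
      | qleafD i m => rfl
      | ebr j => exact Fin.elim0 (by assumption)
      | pleafc m => exact Fin.elim0 (by assumption)
      | qleafE j m => exact Fin.elim0 (by assumption)
      | qleafM m m' => exact Fin.elim0 (by assumption)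
    have hne : f0 ≠ 0 := by
      intro h
      have := congrFun h (.path 0)
      rw [e1, Pi.zero_apply] at this
      exact absurd this (by positivity)
    have hD0 : dirichletForm G f0 = (A + s) * bet ^ 2 + dR * ((bet - 1) ^ 2 + A) := by
      rw [dirichlet_eval f0 (fun m => rfl) (fun i m => rfl), e1]
      rw [Finset.sum_congr rfl fun x _ => by rw [e2 x]]
      rw [Finset.sum_const, Finset.card_univ, Fintype.card_fin, nsmul_eq_mul, hdcast]
      push_cast
      ring
    have hNf0 : f0 (.path 0) ^ 2 + ∑ i, f0 (.dbr i) ^ 2 = bet ^ 2 + dR := by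
      rw [e1, Finset.sum_congr rfl fun x _ => by rw [e2 x]]
      rw [Finset.sum_const, Finset.card_univ, Fintype.card_fin, nsmul_eq_mul, hdcast]
      ring
    unfold lambda1
    refine IsLeast.csInf_eq ⟨⟨f0, hvanish, hne, ?_⟩, ?_⟩
    · rw [boundary_sum' _ hp hq f0, hNf0, hD0, eq_div_iff (by nlinarith)]
      linear_combination (-bet) * hchar
    · rintro r ⟨f, hfB, hf0, rfl⟩
      rw [boundary_sum' _ hp hq f]
      obtain ⟨hpos, hle⟩ := hlow f hfB hf0
      rw [le_div_iff₀ hpos]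
      exact hle
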